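/- Let N ⊆ M be a Frobenius extension with Frobenius homomorphism ψ, quasibasis Σᵢ uᵢ ⊗ vᵢ, A = End(_N M_N), and B = (M ⊗_N M)^N the ring with multiplication (b¹⊗b²)(b'¹⊗b'²) = b'¹b¹ ⊗ b²b'² and unit 1⊗1. Define F : A → B by F(α) = Σᵢ uᵢ ⊗ α(vᵢ) and F⁻¹ : B → A by F⁻¹(b)(m) = ψ(m b¹) b². Then F and F⁻¹ are mutually inverse bijections of additive groups, and F(α β) = F(β) ∗ F(α), where the convolution on B is a ∗ b = a¹ ψ(a² b¹) ⊗ b². -/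

import Mathlib

open scoped TensorProduct

namespace Frob

variable {N M : Type*} [Ring N] [Ring M]

/-- A Frobenius system for a ring extension `ι : N →+* M`:
an `N`-`N`-bimodule map `ψ : M → N` together with a quasibasis `∑ i, u i ⊗ v i`. -/
structure FrobeniusData (ι : N →+* M) where
  ψ : M →+ N
  ψ_left : ∀ (n : N) (m : M), ψ (ι n * m) = n * ψ m
  ψ_right : ∀ (m : M) (n : N), ψ (m * ι n) = ψ m * n
  k : ℕ
  u : Fin k → M
  v : Fin k → M
  quasi_left : ∀ m : M, ∑ i, ι (ψ (m * u i)) * v i = m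
  quasi_right : ∀ m : M, ∑ i, u i * ι (ψ (v i * m)) = m

/-- `N`-`N`-bimodule endomorphism of `M`. -/
def IsBimodEnd (ι : N →+* M) (α : M →+ M) : Prop :=
  (∀ n m, α (ι n * m) = ι n * α m) ∧ (∀ m n, α (m * ι n) = α m * ι n)

variable {ι : N →+* M}

/-- The antipode `S_A(α)(m') = ∑ i, u i * ι (ψ (α (v i) * m'))`. -/
noncomputable def SA (D : FrobeniusData ι) (α : M →+ M) : M →+ M :=
  AddMonoidHom.mk' (fun m' => ∑ i, D.u i * ι (D.ψ (α (D.v i) * m')))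
    (by intro x y; simp [mul_add, map_add, Finset.sum_add_distrib])

/-- The inverse antipode `S_A⁻¹(α)(m') = ∑ i, ι (ψ (m' * α (u i))) * v i`. -/
noncomputable def SAinv (D : FrobeniusData ι) (α : M →+ M) : M →+ M :=
  AddMonoidHom.mk' (fun m' => ∑ i, ι (D.ψ (m' * α (D.u i))) * D.v i)
    (by intro x y; simp [add_mul, map_add, Finset.sum_add_distrib])

/-- The subgroup of `M ⊗[ℤ] M` by which one quotients to obtain `M ⊗_N M`. -/
def relN (ι : N →+* M) : Submodule ℤ (M ⊗[ℤ] M) :=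
  Submodule.span ℤ
    {x | ∃ (n : N) (a b : M), x = (a * ι n) ⊗ₜ[ℤ] b - a ⊗ₜ[ℤ] (ι n * b)}

/-- The subgroup of `M ⊗[ℤ] M ⊗[ℤ] M` by which one quotients to obtain `M ⊗_N M ⊗_N M`. -/
def relN3 (ι : N →+* M) : Submodule ℤ (M ⊗[ℤ] (M ⊗[ℤ] M)) :=
  Submodule.span ℤ
    ({x | ∃ (n : N) (a b c : M),
        x = (a * ι n) ⊗ₜ[ℤ] (b ⊗ₜ[ℤ] c) - a ⊗ₜ[ℤ] ((ι n * b) ⊗ₜ[ℤ] c)} ∪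
     {x | ∃ (n : N) (a b c : M),
        x = a ⊗ₜ[ℤ] ((b * ι n) ⊗ₜ[ℤ] c) - a ⊗ₜ[ℤ] (b ⊗ₜ[ℤ] (ι n * c))})

/-- The Nakayama map `ν(c) = ∑ i, ψ(u i * c) * v i` on the centralizer. -/
noncomputable def nakayama (D : FrobeniusData ι) (c : M) : M :=
  ∑ i, ι (D.ψ (D.u i * c)) * D.v i

/-- The centralizer `C_M(N)`. -/
def centralizer (ι : N →+* M) : Set M := {c : M | ∀ n : N, c * ι n = ι n * c}

/-- The Fourier transform `F(α) = ∑ i, u i ⊗ α (v i)` (a representative in `M ⊗[ℤ] M`). -/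
noncomputable def Ftr (D : FrobeniusData ι) (α : M →+ M) : M ⊗[ℤ] M :=
  ∑ i, D.u i ⊗ₜ[ℤ] α (D.v i)

/-- The inverse Fourier transform evaluated on a representative:
`F⁻¹(b¹ ⊗ b²)(m) = ψ(m * b¹) * b²`. -/
noncomputable def FinvEval (D : FrobeniusData ι) (x : M ⊗[ℤ] M) (m : M) : M :=
  LinearMap.mul' ℤ M
    ((LinearMap.rTensor M
      ((ι.toAddMonoidHom.comp (D.ψ.comp (AddMonoidHom.mulLeft m))).toIntLinearMap)) x)

end Frob

namespace Frob
variable {N M : Type*} [Ring N] [Ring M] {ι : N →+* M}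

/-- `F⁻¹(x)` as an additive endomorphism of `M`. -/
noncomputable def FinvHom (D : FrobeniusData ι) (x : M ⊗[ℤ] M) : M →+ M :=
  AddMonoidHom.mk' (fun m => FinvEval D x m) (by
    intro a b
    induction x using TensorProduct.induction_on with
    | zero => simp [FinvEval]
    | tmul p q => simp [FinvEval, add_mul, map_add]
    | add u v hu hv =>
        simp only [FinvEval, map_add] at hu hv ⊢
        rw [hu, hv]; abel)
end Frob

/-! Everything reduces to the two quasibasis identities. Left `N`-linearity of `α` and
`quasi_left` expand `α m = ∑ j, ψ(m u j) α(v j)`, which gives `F⁻¹ ∘ F = id` and, applied to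
`α (β (v i))`, the convolution formula once `ψ(…)` is moved across `⊗_N`; `quasi_right` gives
`F ∘ F⁻¹ = id` in the same way. `F⁻¹(x)(m)` is `ℤ`-linear in `x` and kills the relations of
`⊗_N`, so the centrality of `x` modulo those relations becomes right `N`-linearity of `F⁻¹(x)`. -/

namespace Frob

variable {N M : Type*} [Ring N] [Ring M] {ι : N →+* M}

lemma mul_tmul_sub_tmul_mul_mem_relN (n : N) (a b : M) :
    (a * ι n) ⊗ₜ[ℤ] b - a ⊗ₜ[ℤ] (ι n * b) ∈ relN ι :=
  Submodule.subset_span ⟨n, a, b, rfl⟩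

lemma tmul_mul_sub_mul_tmul_mem_relN (n : N) (a b : M) :
    a ⊗ₜ[ℤ] (ι n * b) - (a * ι n) ⊗ₜ[ℤ] b ∈ relN ι := by
  simpa only [neg_sub] using (relN ι).neg_mem (mul_tmul_sub_tmul_mul_mem_relN n a b)

section FinvEval

variable (D : FrobeniusData ι)

noncomputable def finvEvalLinear (m : M) : M ⊗[ℤ] M →ₗ[ℤ] M :=
  LinearMap.mul' ℤ M ∘ₗ LinearMap.rTensor M
    (ι.toAddMonoidHom.comp (D.ψ.comp (AddMonoidHom.mulLeft m))).toIntLinearMap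

lemma finvEvalLinear_apply (x : M ⊗[ℤ] M) (m : M) : finvEvalLinear D m x = FinvEval D x m :=
  rfl

@[simp]
lemma finvEval_tmul (p q m : M) : FinvEval D (p ⊗ₜ[ℤ] q) m = ι (D.ψ (m * p)) * q := by
  simp [FinvEval]

@[simp]
lemma finvEval_zero (m : M) : FinvEval D 0 m = 0 := by
  simp [← finvEvalLinear_apply]

lemma finvEval_add (x y : M ⊗[ℤ] M) (m : M) :
    FinvEval D (x + y) m = FinvEval D x m + FinvEval D y m := by
  simp only [← finvEvalLinear_apply, map_add]

lemma finvEval_sub (x y : M ⊗[ℤ] M) (m : M) :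
    FinvEval D (x - y) m = FinvEval D x m - FinvEval D y m := by
  simp only [← finvEvalLinear_apply, map_sub]

lemma finvEval_sum {κ : Type*} (s : Finset κ) (f : κ → M ⊗[ℤ] M) (m : M) :
    FinvEval D (∑ i ∈ s, f i) m = ∑ i ∈ s, FinvEval D (f i) m := by
  simp only [← finvEvalLinear_apply, map_sum]

lemma finvEval_eq_zero_of_mem_relN {x : M ⊗[ℤ] M} (hx : x ∈ relN ι) (m : M) :
    FinvEval D x m = 0 := by
  suffices relN ι ≤ LinearMap.ker (finvEvalLinear D m) from this hx
  refine Submodule.span_le.mpr ?_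
  rintro _ ⟨n, a, b, rfl⟩
  simp [finvEvalLinear_apply, finvEval_sub, ← mul_assoc, D.ψ_right]

lemma finvEval_mul_left (x : M ⊗[ℤ] M) (n : N) (m : M) :
    FinvEval D x (ι n * m) = ι n * FinvEval D x m := by
  induction x using TensorProduct.induction_on with
  | zero => simp
  | tmul p q => simp [mul_assoc, D.ψ_left]
  | add y z hy hz => rw [finvEval_add, finvEval_add, hy, hz, mul_add]

lemma finvEval_map_mulLeft_id (n : N) (x : M ⊗[ℤ] M) (m : M) :
    FinvEval D (TensorProduct.map (LinearMap.mulLeft ℤ (ι n)) LinearMap.id x) m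
      = FinvEval D x (m * ι n) := by
  induction x using TensorProduct.induction_on with
  | zero => simp
  | tmul p q => simp [mul_assoc]
  | add y z hy hz => simp only [map_add, finvEval_add, hy, hz]

lemma finvEval_map_id_mulRight (n : N) (x : M ⊗[ℤ] M) (m : M) :
    FinvEval D (TensorProduct.map LinearMap.id (LinearMap.mulRight ℤ (ι n)) x) m
      = FinvEval D x m * ι n := by
  induction x using TensorProduct.induction_on with
  | zero => simp
  | tmul p q => simp [mul_assoc]
  | add y z hy hz => simp only [map_add, finvEval_add, hy, hz, add_mul]

lemma isBimodEnd_finvHom {x : M ⊗[ℤ] M}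
    (hx : ∀ n : N, TensorProduct.map (LinearMap.mulLeft ℤ (ι n)) LinearMap.id x
      - TensorProduct.map LinearMap.id (LinearMap.mulRight ℤ (ι n)) x ∈ relN ι) :
    IsBimodEnd ι (FinvHom D x) := by
  refine ⟨finvEval_mul_left D x, fun m n => ?_⟩
  have h := finvEval_eq_zero_of_mem_relN D (hx n) m
  rwa [finvEval_sub, finvEval_map_mulLeft_id, finvEval_map_id_mulRight, sub_eq_zero] at h

lemma sum_tmul_finvEval_sub_mem_relN (x : M ⊗[ℤ] M) :
    (∑ i, D.u i ⊗ₜ[ℤ] FinvEval D x (D.v i)) - x ∈ relN ι := by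
  induction x using TensorProduct.induction_on with
  | zero => simp [(relN ι).zero_mem]
  | tmul p q =>
    simp only [finvEval_tmul]
    conv in p ⊗ₜ[ℤ] q => rw [← D.quasi_right p, TensorProduct.sum_tmul]
    rw [← Finset.sum_sub_distrib]
    exact Submodule.sum_mem _ fun i _ => by
      simpa using tmul_mul_sub_mul_tmul_mem_relN (D.ψ (D.v i * p)) (D.u i) q
  | add y z hy hz =>
    simpa only [finvEval_add, TensorProduct.tmul_add, Finset.sum_add_distrib,
      add_sub_add_comm] using (relN ι).add_mem hy hz

end FinvEval

section Ftr

variable (D : FrobeniusData ι)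

lemma ftr_add (α β : M →+ M) : Ftr D (α + β) = Ftr D α + Ftr D β := by
  simp [Ftr, TensorProduct.tmul_add, Finset.sum_add_distrib]

variable {D} in
lemma apply_eq_sum_quasibasis {α : M →+ M} (hα : ∀ n m, α (ι n * m) = ι n * α m) (m : M) :
    α m = ∑ j, ι (D.ψ (m * D.u j)) * α (D.v j) := by
  conv_lhs => rw [← D.quasi_left m]
  simp only [map_sum, hα]

lemma finvEval_ftr {α : M →+ M} (hα : ∀ n m, α (ι n * m) = ι n * α m) (m : M) :
    FinvEval D (Ftr D α) m = α m := by
  simp [Ftr, finvEval_sum, apply_eq_sum_quasibasis (D := D) hα m]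

lemma ftr_comp_sub_convolution_mem_relN {α : M →+ M}
    (hα : ∀ n m, α (ι n * m) = ι n * α m) (β : M →+ M) :
    Ftr D (α.comp β)
      - (∑ i, ∑ j, (D.u i * ι (D.ψ (β (D.v i) * D.u j))) ⊗ₜ[ℤ] α (D.v j)) ∈ relN ι := by
  have hexp : Ftr D (α.comp β)
      = ∑ i, ∑ j, D.u i ⊗ₜ[ℤ] (ι (D.ψ (β (D.v i) * D.u j)) * α (D.v j)) :=
    Finset.sum_congr rfl fun i _ => by
      rw [AddMonoidHom.comp_apply, apply_eq_sum_quasibasis hα, TensorProduct.tmul_sum]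
  simp only [hexp, ← Finset.sum_sub_distrib]
  exact Submodule.sum_mem _ fun i _ => Submodule.sum_mem _ fun j _ =>
    tmul_mul_sub_mul_tmul_mem_relN _ _ _

end Ftr

end Frob

/-- Elements of `B` are encoded by representatives `x ∈ M ⊗[ℤ] M` which are `N`-central modulo
the relation submodule `relN`, and equalities in `M ⊗_N M` as membership of differences in
`relN`. -/
theorem statement3 {N M : Type*} [Ring N] [Ring M] (ι : N →+* M)
    (D : Frob.FrobeniusData ι) :
    -- `F` is additive
    (∀ α β : M →+ M, Frob.Ftr D (α + β) = Frob.Ftr D α + Frob.Ftr D β) ∧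
    -- `F⁻¹` maps `B` into `A`:  `F⁻¹(b)` is a bimodule endomorphism for central `b`
    (∀ x : M ⊗[ℤ] M,
      (∀ n : N, (TensorProduct.map (LinearMap.mulLeft ℤ (ι n)) LinearMap.id) x
            - (TensorProduct.map LinearMap.id (LinearMap.mulRight ℤ (ι n))) x ∈ Frob.relN ι) →
      Frob.IsBimodEnd ι (Frob.FinvHom D x)) ∧
    -- `F⁻¹ ∘ F = id` on bimodule endomorphisms
    (∀ α : M →+ M, Frob.IsBimodEnd ι α → ∀ m, Frob.FinvEval D (Frob.Ftr D α) m = α m) ∧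
    -- `F ∘ F⁻¹ = id` on `N`-central representatives
    (∀ x : M ⊗[ℤ] M,
      (∀ n : N, (TensorProduct.map (LinearMap.mulLeft ℤ (ι n)) LinearMap.id) x
            - (TensorProduct.map LinearMap.id (LinearMap.mulRight ℤ (ι n))) x ∈ Frob.relN ι) →
      (∑ i, D.u i ⊗ₜ[ℤ] Frob.FinvEval D x (D.v i)) - x ∈ Frob.relN ι) ∧
    -- `F(α ∘ β) = F(β) ∗ F(α)`
    (∀ α β : M →+ M, Frob.IsBimodEnd ι α → Frob.IsBimodEnd ι β →
      Frob.Ftr D (α.comp β)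
        - (∑ i, ∑ j, (D.u i * ι (D.ψ (β (D.v i) * D.u j))) ⊗ₜ[ℤ] α (D.v j))
        ∈ Frob.relN ι) := by
  refine ⟨Frob.ftr_add D, fun _ => Frob.isBimodEnd_finvHom D,
    fun α hα => Frob.finvEval_ftr D hα.1, fun x _ => Frob.sum_tmul_finvEval_sub_mem_relN D x,
    fun α β hα _ => Frob.ftr_comp_sub_convolution_mem_relN D hα.1 β⟩
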